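/- Let H : ℝ → Matrix n n ℂ be a path of Hermitian matrices that is twice differentiable at s₀, let ω0 : ℝ → ℝ be continuous with ω0(s) an eigenvalue of H(s) for s near s₀, and let Δ > 0 be such that the spectrum of H(s₀) intersected with the closed interval [ω0(s₀) − Δ, ω0(s₀) + Δ] equals {ω0(s₀)}. Let P : ℝ → Matrix n n ℂ be twice differentiable at s₀, where for each s near s₀, P(s) is the orthogonal projection onto the eigenspace of H(s) for the eigenvalue ω0(s). Then ‖P''(s₀)‖ ≤ 8·‖H'(s₀)‖²/Δ² + 2·‖H''(s₀)‖/Δ. -/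

import Mathlib

/-!
Write `P, P₁, P₂` for `P s₀, P' s₀, P''` and `A = H s₀ - ω0 s₀`, so that `A P = P A = 0`.
Near `s₀` we have `H P = ω0 P`, hence `(H - ω0 s₀) P = P (H - ω0 s₀) P`; differentiating this
relation and `P² = P` twice (no derivative of `ω0` is needed) gives `P P₂ P = -2 P P₁ P₁ P`,
`(1 - P) P₂ (1 - P) = 2 (P₁ P) (P P₁)`, `A P₁ P = -(1 - P) H' P` and an expression of
`A P₂ P` through `H'`, `H''` and `P₁ P`. The gap says that `A` is bounded below by `Δ` on the
range of `1 - P`, so `‖P₁ P‖ ≤ ‖H'‖ / Δ` and `‖(1 - P) P₂ P‖ ≤ (‖H''‖ + 4 ‖H'‖ ‖P₁ P‖) / Δ`.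
In the block decomposition of `P₂` along `P` and `1 - P`, the diagonal and the off-diagonal
part each have norm at most the larger of their two blocks, which gives the bound.
-/

open scoped Matrix.Norms.L2Operator Topology
open Module End

structure HasSecondDerivAt {𝔸 : Type*} [NormedRing 𝔸] [NormedAlgebra ℝ 𝔸]
    (F F' : ℝ → 𝔸) (F'' : 𝔸) (s₀ : ℝ) : Prop where
  eventually_hasDerivAt : ∀ᶠ s in 𝓝 s₀, HasDerivAt F (F' s) s
  hasDerivAt_deriv : HasDerivAt F' F'' s₀

namespace HasSecondDerivAt

variable {𝔸 : Type*} [NormedRing 𝔸] [NormedAlgebra ℝ 𝔸] {F F' G G' : ℝ → 𝔸} {F'' G'' : 𝔸}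
  {s₀ : ℝ}

theorem mul (hF : HasSecondDerivAt F F' F'' s₀) (hG : HasSecondDerivAt G G' G'' s₀) :
    HasSecondDerivAt (fun s => F s * G s) (fun s => F' s * G s + F s * G' s)
      (F'' * G s₀ + F' s₀ * G' s₀ + (F' s₀ * G' s₀ + F s₀ * G'')) s₀ where
  eventually_hasDerivAt := by
    filter_upwards [hF.1, hG.1] with s hFs hGs using hFs.mul hGs
  hasDerivAt_deriv := (hF.2.mul hG.1.self_of_nhds).add (hF.1.self_of_nhds.mul hG.2)

theorem sub_const (hF : HasSecondDerivAt F F' F'' s₀) (c : 𝔸) :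
    HasSecondDerivAt (fun s => F s - c) F' F'' s₀ where
  eventually_hasDerivAt := by
    filter_upwards [hF.1] with s hFs using hFs.sub_const c
  hasDerivAt_deriv := hF.2

theorem star [StarRing 𝔸] [StarModule ℝ 𝔸] [ContinuousStar 𝔸]
    (hF : HasSecondDerivAt F F' F'' s₀) :
    HasSecondDerivAt (fun s => star (F s)) (fun s => star (F' s)) (star F'') s₀ where
  eventually_hasDerivAt := by
    filter_upwards [hF.1] with s hFs using hFs.star
  hasDerivAt_deriv := hF.2.star

theorem eq_of_eventuallyEq (hF : HasSecondDerivAt F F' F'' s₀)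
    (hG : HasSecondDerivAt G G' G'' s₀) (h : F =ᶠ[𝓝 s₀] G) : F' s₀ = G' s₀ ∧ F'' = G'' := by
  have h' : F' =ᶠ[𝓝 s₀] G' := by
    filter_upwards [hF.1, hG.1, h.eventually_nhds] with s hFs hGs hs
    exact hFs.unique (hGs.congr_of_eventuallyEq hs)
  exact ⟨h'.self_of_nhds, hF.2.unique (hG.2.congr_of_eventuallyEq h')⟩

theorem isSelfAdjoint [StarRing 𝔸] [StarModule ℝ 𝔸] [ContinuousStar 𝔸]
    (hF : HasSecondDerivAt F F' F'' s₀) (h : ∀ᶠ s in 𝓝 s₀, IsSelfAdjoint (F s)) :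
    IsSelfAdjoint (F' s₀) ∧ IsSelfAdjoint F'' :=
  hF.star.eq_of_eventuallyEq hF h

end HasSecondDerivAt

section DerivIdentities

variable {R : Type*} [Ring R] {P P₁ P₂ A A₁ A₂ : R}

theorem one_sub_mul_deriv_eq (hP₁ : P₁ * P + P * P₁ = P₁) : (1 - P) * P₁ = P₁ * P := by
  linear_combination (norm := noncomm_ring) -hP₁

theorem deriv_mul_one_sub_eq (hP₁ : P₁ * P + P * P₁ = P₁) : P₁ * (1 - P) = P * P₁ := by
  linear_combination (norm := noncomm_ring) -hP₁

theorem IsIdempotentElem.mul_deriv2_mul_eq (hP : IsIdempotentElem P)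
    (hP₂ : P₂ * P + P₁ * P₁ + (P₁ * P₁ + P * P₂) = P₂) :
    P * P₂ * P = -(2 • (P * P₁ * (P₁ * P))) := by
  linear_combination (norm := noncomm_ring) P * hP₂ * P - P * P₂ * hP.eq - hP.eq * P₂ * P

theorem IsIdempotentElem.one_sub_mul_deriv2_mul_one_sub_eq (hP : IsIdempotentElem P)
    (hP₂ : P₂ * P + P₁ * P₁ + (P₁ * P₁ + P * P₂) = P₂) :
    (1 - P) * P₂ * (1 - P) = 2 • ((1 - P) * P₁ * (P₁ * (1 - P))) := by
  linear_combination (norm := noncomm_ring)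
    -((1 - P) * hP₂ * (1 - P)) - (1 - P) * P₂ * hP.eq - hP.eq * P₂ * (1 - P)

theorem annihilator_mul_deriv_eq (hAP : A * P = 0) (hPA : P * A = 0)
    (hL₁ : A₁ * P + A * P₁ = P₁ * (A * P) + P * (A₁ * P + A * P₁)) :
    A * P₁ = -((1 - P) * A₁ * P) := by
  linear_combination (norm := noncomm_ring) hL₁ + P₁ * hAP + hPA * P₁

theorem IsIdempotentElem.annihilator_mul_deriv2_mul_eq (hP : IsIdempotentElem P)
    (hAP : A * P = 0) (hPA : P * A = 0)
    (hL₁ : A₁ * P + A * P₁ = P₁ * (A * P) + P * (A₁ * P + A * P₁))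
    (hL₂ : A₂ * P + A₁ * P₁ + (A₁ * P₁ + A * P₂) = P₂ * (A * P) + P₁ * (A₁ * P + A * P₁) +
      (P₁ * (A₁ * P + A * P₁) + P * (A₂ * P + A₁ * P₁ + (A₁ * P₁ + A * P₂)))) :
    A * P₂ * P = 2 • (P₁ * P * A₁ * P) - (1 - P) * A₂ * P - 2 • ((1 - P) * A₁ * (P₁ * P)) := by
  linear_combination (norm := noncomm_ring) hL₂ * P + P₂ * hAP * P + hPA * P₂ * P
    + 2 • (P₁ * annihilator_mul_deriv_eq hAP hPA hL₁ * P) + 2 • (P₁ * P * A₁ * hP.eq)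
    + (P - 1) * A₂ * hP.eq

end DerivIdentities

theorem norm_two_nsmul_mul_le {𝔸 : Type*} [NormedRing 𝔸] (a b : 𝔸) :
    ‖2 • (a * b)‖ ≤ 2 * (‖a‖ * ‖b‖) :=
  norm_nsmul_le.trans (by push_cast; gcongr; exact norm_mul_le a b)

namespace IsStarProjection

variable {𝔸 : Type*} [NormedRing 𝔸] [StarRing 𝔸] [CStarRing 𝔸] {p : 𝔸}

theorem norm_mul_le_left (hp : IsStarProjection p) (x : 𝔸) : ‖p * x‖ ≤ ‖x‖ :=
  (norm_mul_le _ _).trans (mul_le_of_le_one_left (norm_nonneg x) (IsStarProjection.norm_le p hp))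

theorem norm_mul_le_right (hp : IsStarProjection p) (x : 𝔸) : ‖x * p‖ ≤ ‖x‖ :=
  (norm_mul_le _ _).trans (mul_le_of_le_one_right (norm_nonneg x) (IsStarProjection.norm_le p hp))

end IsStarProjection

namespace ContinuousLinearMap

variable {𝕜 E : Type*} [RCLike 𝕜] [NormedAddCommGroup E] [InnerProductSpace 𝕜 E]
  [CompleteSpace E] {p : E →L[𝕜] E}

theorem IsStarProjection.norm_add_one_sub_sq (hp : IsStarProjection p) (u w : E) :
    ‖p u + (1 - p) w‖ ^ 2 = ‖p u‖ ^ 2 + ‖(1 - p) w‖ ^ 2 := by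
  rw [sq, sq, sq]
  refine norm_add_sq_eq_norm_sq_add_norm_sq_of_inner_eq_zero (𝕜 := 𝕜) _ _ ?_
  rw [← adjoint_inner_right, ← star_eq_adjoint, hp.isSelfAdjoint.star_eq, ← mul_apply_eq_comp,
    hp.mul_one_sub_self, zero_apply, inner_zero_right]

theorem IsStarProjection.norm_mul_mul_add_le {r x y : E →L[𝕜] E} (hp : IsStarProjection p)
    (hr : IsStarProjection r) {c : ℝ} (hx : ‖p * x * r‖ ≤ c)
    (hy : ‖(1 - p) * y * (1 - r)‖ ≤ c) : ‖p * x * r + (1 - p) * y * (1 - r)‖ ≤ c := by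
  have hc : 0 ≤ c := (norm_nonneg _).trans hx
  refine opNorm_le_bound _ hc fun v => ?_
  -- the two summands take orthogonal values and only see `r v`, resp. `(1 - r) v`
  have hxv : ‖p (x (r v))‖ ≤ c * ‖r v‖ := by
    calc ‖p (x (r v))‖ = ‖(p * x * r) (r v)‖ := by
          simp only [mul_apply_eq_comp, ← mul_apply_eq_comp r r, hr.isIdempotentElem.eq]
      _ ≤ c * ‖r v‖ := (p * x * r).le_of_opNorm_le hx _
  have hyv : ‖(1 - p) (y ((1 - r) v))‖ ≤ c * ‖(1 - r) v‖ := by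
    calc ‖(1 - p) (y ((1 - r) v))‖ = ‖((1 - p) * y * (1 - r)) ((1 - r) v)‖ := by
          simp only [mul_apply_eq_comp, ← mul_apply_eq_comp (1 - r) (1 - r),
            hr.one_sub.isIdempotentElem.eq]
      _ ≤ c * ‖(1 - r) v‖ := ((1 - p) * y * (1 - r)).le_of_opNorm_le hy _
  have hv : ‖v‖ ^ 2 = ‖r v‖ ^ 2 + ‖(1 - r) v‖ ^ 2 := by
    rw [← IsStarProjection.norm_add_one_sub_sq hr]
    simp
  have key : ‖(p * x * r + (1 - p) * y * (1 - r)) v‖ ^ 2 ≤ (c * ‖v‖) ^ 2 := by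
    simp only [add_apply, mul_apply_eq_comp]
    rw [IsStarProjection.norm_add_one_sub_sq hp, mul_pow, hv]
    nlinarith [norm_nonneg (p (x (r v))), norm_nonneg ((1 - p) (y ((1 - r) v)))]
  exact (pow_le_pow_iff_left₀ (norm_nonneg _) (by positivity) two_ne_zero).mp key

end ContinuousLinearMap

theorem EuclideanSpace.mul_norm_le_norm {𝕜 ι : Type*} [RCLike 𝕜] [Fintype ι]
    {u w : EuclideanSpace 𝕜 ι} {c : ℝ} (hc : 0 ≤ c) (h : ∀ i, c * ‖u i‖ ≤ ‖w i‖) :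
    c * ‖u‖ ≤ ‖w‖ := by
  rw [EuclideanSpace.norm_eq, EuclideanSpace.norm_eq, ← Real.sqrt_sq hc,
    ← Real.sqrt_mul (sq_nonneg c), Finset.mul_sum]
  gcongr with i
  rw [← mul_pow]
  exact pow_le_pow_left₀ (by positivity) (h i) 2

theorem LinearMap.IsSymmetric.mul_norm_le_norm_sub_smul {𝕜 E : Type*} [RCLike 𝕜]
    [NormedAddCommGroup E] [InnerProductSpace 𝕜 E] [FiniteDimensional 𝕜 E] {T : E →ₗ[𝕜] E}
    (hT : T.IsSymmetric) {ω Δ : ℝ} (hΔ : 0 ≤ Δ)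
    (hgap : ∀ μ : ℝ, HasEigenvalue T μ → μ ≠ ω → Δ ≤ |μ - ω|)
    {x : E} (hx : x ∈ (eigenspace T ω)ᗮ) : Δ * ‖x‖ ≤ ‖T x - (ω : 𝕜) • x‖ := by
  set b := hT.eigenvectorBasis rfl
  set μ := hT.eigenvalues rfl
  rw [← b.repr.norm_map x, ← b.repr.norm_map]
  refine EuclideanSpace.mul_norm_le_norm hΔ fun i => ?_
  have hrepr : b.repr (T x - (ω : 𝕜) • x) i = ((μ i - ω : ℝ) : 𝕜) * b.repr x i := by
    simp [hT.eigenvectorBasis_apply_self_apply, b, μ, sub_mul, RCLike.real_smul_eq_coe_mul]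
  rw [hrepr, norm_mul, RCLike.norm_ofReal]
  by_cases hi : μ i = ω
  · have hb : b i ∈ eigenspace T ω := hi ▸ (hT.hasEigenvector_eigenvectorBasis rfl i).1
    simp [b.repr_apply_apply, Submodule.inner_right_of_mem_orthogonal hb hx]
  · exact mul_le_mul_of_nonneg_right (hgap _ (hT.hasEigenvalue_eigenvalues rfl i) hi)
      (norm_nonneg _)

namespace Matrix

theorem mul_eq_smul_of_mulVec_eq_self {ι R : Type*} [Fintype ι] [CommSemiring R]
    {H P : Matrix ι ι R} {c : R} (hP : IsIdempotentElem P)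
    (h : ∀ v, P *ᵥ v = v → H *ᵥ v = c • v) : H * P = c • P := by
  refine ext_iff_mulVec.mpr fun v => ?_
  rw [← mulVec_mulVec, h _ (by rw [mulVec_mulVec, hP.eq]), smul_mulVec]

variable {ι 𝕜 : Type*} [Fintype ι] [DecidableEq ι] [RCLike 𝕜]

theorem IsStarProjection.norm_mul_mul_add_le {P R X Y : Matrix ι ι 𝕜}
    (hP : IsStarProjection P) (hR : IsStarProjection R) {c : ℝ} (hX : ‖P * X * R‖ ≤ c)
    (hY : ‖(1 - P) * Y * (1 - R)‖ ≤ c) : ‖P * X * R + (1 - P) * Y * (1 - R)‖ ≤ c := by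
  rw [← l2_opNorm_toEuclideanCLM] at hX hY ⊢
  simp only [map_add, map_mul, map_sub, map_one] at hX hY ⊢
  exact ContinuousLinearMap.IsStarProjection.norm_mul_mul_add_le (hP.map _) (hR.map _) hX hY

theorem IsHermitian.mul_norm_one_sub_mul_le {H P : Matrix ι ι 𝕜} (hH : H.IsHermitian)
    (hP : IsStarProjection P) {ω Δ : ℝ} (hΔ : 0 < Δ)
    (hgap : ∀ μ : ℝ, (μ : 𝕜) ∈ spectrum 𝕜 H → μ ≠ ω → Δ ≤ |μ - ω|)
    (hPH : ∀ v, H *ᵥ v = (ω : 𝕜) • v ↔ P *ᵥ v = v) (Y : Matrix ι ι 𝕜) :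
    Δ * ‖(1 - P) * Y‖ ≤ ‖(H - (ω : 𝕜) • 1) * Y‖ := by
  have hAQ : (H - (ω : 𝕜) • 1) * (1 - P) = H - (ω : 𝕜) • 1 := by
    rw [mul_sub, mul_one, sub_mul, mul_eq_smul_of_mulVec_eq_self hP.isIdempotentElem
      fun v => (hPH v).2, smul_mul_assoc, one_mul, sub_self, sub_zero]
  set f := toEuclideanCLM (n := ι) (𝕜 := 𝕜)
  have hT : (f H : EuclideanSpace 𝕜 ι →ₗ[𝕜] _).IsSymmetric := by
    rw [coe_toEuclideanCLM_eq_toEuclideanLin]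
    exact isSymmetric_toEuclideanLin_iff.mpr hH
  have hgapT : ∀ μ : ℝ, HasEigenvalue (f H : EuclideanSpace 𝕜 ι →ₗ[𝕜] _) μ → μ ≠ ω →
      Δ ≤ |μ - ω| := fun μ hμ => hgap μ <| by
    rw [← spectrum_toLpLin 2]
    exact hμ.mem_spectrum
  rw [← hAQ, mul_comm, ← le_div_iff₀ hΔ, ← l2_opNorm_toEuclideanCLM,
    ← l2_opNorm_toEuclideanCLM]
  refine ContinuousLinearMap.opNorm_le_bound _ (by positivity) fun v => ?_
  rw [div_mul_eq_mul_div, le_div_iff₀ hΔ, mul_comm]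
  refine (hT.mul_norm_le_norm_sub_smul hΔ.le hgapT ?_).trans ?_
  · refine (Submodule.mem_orthogonal _ _).mpr fun u hu => ?_
    have hPu : f P u = u := by
      have hHu : H *ᵥ u.ofLp = (ω : 𝕜) • u.ofLp :=
        congrArg WithLp.ofLp (mem_eigenspace_iff.mp hu)
      exact congrArg (WithLp.toLp 2) ((hPH _).1 hHu)
    have hQu : f (1 - P) u = 0 := by
      rw [map_sub, map_one, _root_.sub_apply, one_apply_eq_self, hPu, sub_self]
    rw [map_mul, mul_apply_eq_comp, ← (hP.one_sub.map f).isSelfAdjoint.isSymmetric.apply_clm,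
      hQu, inner_zero_left]
  · calc _ = ‖f ((H - (ω : 𝕜) • 1) * ((1 - P) * Y)) v‖ := by
          rw [map_mul f (H - _), mul_apply_eq_comp, map_sub, map_smul, map_one,
            _root_.sub_apply, _root_.smul_apply, one_apply_eq_self]
          rfl
      _ ≤ _ := by rw [← mul_assoc]; exact ContinuousLinearMap.le_opNorm _ _

end Matrix

theorem le_abs_sub_of_inter_subset {S : Set ℂ} {ω Δ μ : ℝ}
    (h : S ∩ ((fun x : ℝ => (x : ℂ)) '' Set.Icc (ω - Δ) (ω + Δ)) ⊆ {(ω : ℂ)})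
    (hμ : (μ : ℂ) ∈ S) (hne : μ ≠ ω) : Δ ≤ |μ - ω| := by
  by_contra! hlt
  have hmem : (μ : ℂ) ∈ ({(ω : ℂ)} : Set ℂ) :=
    h ⟨hμ, μ, ⟨by linarith [neg_abs_le (μ - ω)], by linarith [le_abs_self (μ - ω)]⟩, rfl⟩
  exact hne (Complex.ofReal_injective hmem)

theorem two_mul_sq_add_div_le {x a b Δ : ℝ} (hΔ : 0 < Δ) (hx₀ : 0 ≤ x) (ha : 0 ≤ a)
    (hb : 0 ≤ b) (hx : x ≤ a / Δ) :
    2 * x ^ 2 + (b + 4 * (a * x)) / Δ ≤ 8 * a ^ 2 / Δ ^ 2 + 2 * b / Δ := by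
  calc 2 * x ^ 2 + (b + 4 * (a * x)) / Δ ≤ 2 * (a / Δ) ^ 2 + (b + 4 * (a * (a / Δ))) / Δ := by
        gcongr
    _ = 6 * (a ^ 2 / Δ ^ 2) + b / Δ := by field_simp; ring
    _ ≤ 8 * (a ^ 2 / Δ ^ 2) + 2 * (b / Δ) := by
        have : 0 ≤ a ^ 2 / Δ ^ 2 := by positivity
        have : 0 ≤ b / Δ := by positivity
        linarith
    _ = 8 * a ^ 2 / Δ ^ 2 + 2 * b / Δ := by rw [mul_div_assoc, mul_div_assoc]

section DerivBounds

variable {ι 𝕜 : Type*} [Fintype ι] [DecidableEq ι] [RCLike 𝕜]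
  {P P₁ P₂ A A₁ A₂ : Matrix ι ι 𝕜} {Δ : ℝ}

theorem mul_norm_deriv_mul_le (hP : IsStarProjection P) (hP₁ : P₁ * P + P * P₁ = P₁)
    (hAP : A * P = 0) (hPA : P * A = 0)
    (hL₁ : A₁ * P + A * P₁ = P₁ * (A * P) + P * (A₁ * P + A * P₁))
    (hgap : ∀ Y, Δ * ‖(1 - P) * Y‖ ≤ ‖A * Y‖) :
    Δ * ‖P₁ * P‖ ≤ ‖A₁‖ :=
  calc Δ * ‖P₁ * P‖ = Δ * ‖(1 - P) * (P₁ * P)‖ := by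
        rw [← mul_assoc, one_sub_mul_deriv_eq hP₁, mul_assoc, hP.isIdempotentElem.eq]
    _ ≤ ‖A * (P₁ * P)‖ := hgap _
    _ = ‖(1 - P) * A₁ * P‖ := by
        rw [← mul_assoc, annihilator_mul_deriv_eq hAP hPA hL₁, neg_mul, norm_neg, mul_assoc _ P,
          hP.isIdempotentElem.eq]
    _ ≤ ‖A₁‖ := (hP.norm_mul_le_right _).trans (hP.one_sub.norm_mul_le_left A₁)

theorem mul_norm_one_sub_mul_deriv2_mul_le (hP : IsStarProjection P)
    (hAP : A * P = 0) (hPA : P * A = 0)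
    (hL₁ : A₁ * P + A * P₁ = P₁ * (A * P) + P * (A₁ * P + A * P₁))
    (hL₂ : A₂ * P + A₁ * P₁ + (A₁ * P₁ + A * P₂) = P₂ * (A * P) + P₁ * (A₁ * P + A * P₁) +
      (P₁ * (A₁ * P + A * P₁) + P * (A₂ * P + A₁ * P₁ + (A₁ * P₁ + A * P₂))))
    (hgap : ∀ Y, Δ * ‖(1 - P) * Y‖ ≤ ‖A * Y‖) :
    Δ * ‖(1 - P) * P₂ * P‖ ≤ ‖A₂‖ + 4 * (‖A₁‖ * ‖P₁ * P‖) := by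
  have h₁ : ‖P₁ * P * A₁ * P‖ ≤ ‖A₁‖ * ‖P₁ * P‖ := by
    rw [mul_assoc _ A₁, mul_comm ‖A₁‖]
    exact norm_mul_le_of_le le_rfl (hP.norm_mul_le_right A₁)
  have h₂ : ‖(1 - P) * A₁ * (P₁ * P)‖ ≤ ‖A₁‖ * ‖P₁ * P‖ :=
    norm_mul_le_of_le (hP.one_sub.norm_mul_le_left A₁) le_rfl
  have h₃ : ‖(1 - P) * A₂ * P‖ ≤ ‖A₂‖ :=
    (hP.norm_mul_le_right _).trans (hP.one_sub.norm_mul_le_left A₂)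
  calc Δ * ‖(1 - P) * P₂ * P‖ ≤ ‖A * (P₂ * P)‖ := by rw [mul_assoc]; exact hgap _
    _ = ‖2 • (P₁ * P * A₁ * P) - (1 - P) * A₂ * P - 2 • ((1 - P) * A₁ * (P₁ * P))‖ := by
        rw [← mul_assoc, hP.isIdempotentElem.annihilator_mul_deriv2_mul_eq hAP hPA hL₁ hL₂]
    _ ≤ 2 * (‖A₁‖ * ‖P₁ * P‖) + ‖A₂‖ + 2 * (‖A₁‖ * ‖P₁ * P‖) := by
        refine (norm_sub_le _ _).trans
          (add_le_add ((norm_sub_le _ _).trans (add_le_add ?_ h₃)) ?_)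
        · exact norm_nsmul_le.trans (by push_cast; gcongr)
        · exact norm_nsmul_le.trans (by push_cast; gcongr)
    _ = ‖A₂‖ + 4 * (‖A₁‖ * ‖P₁ * P‖) := by ring

theorem norm_deriv2_le (hP : IsStarProjection P) (hP₁s : IsSelfAdjoint P₁)
    (hP₂s : IsSelfAdjoint P₂) (hP₁ : P₁ * P + P * P₁ = P₁)
    (hP₂ : P₂ * P + P₁ * P₁ + (P₁ * P₁ + P * P₂) = P₂) (hA : IsSelfAdjoint A)
    (hAP : A * P = 0)
    (hL₁ : A₁ * P + A * P₁ = P₁ * (A * P) + P * (A₁ * P + A * P₁))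
    (hL₂ : A₂ * P + A₁ * P₁ + (A₁ * P₁ + A * P₂) = P₂ * (A * P) + P₁ * (A₁ * P + A * P₁) +
      (P₁ * (A₁ * P + A * P₁) + P * (A₂ * P + A₁ * P₁ + (A₁ * P₁ + A * P₂))))
    (hΔ : 0 < Δ) (hgap : ∀ Y, Δ * ‖(1 - P) * Y‖ ≤ ‖A * Y‖) :
    ‖P₂‖ ≤ 8 * ‖A₁‖ ^ 2 / Δ ^ 2 + 2 * ‖A₂‖ / Δ := by
  have hPA : P * A = 0 := by
    rw [← hA.star_eq, ← hP.isSelfAdjoint.star_eq, ← star_mul, hAP, star_zero]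
  have hPP₁ : ‖P * P₁‖ = ‖P₁ * P‖ := by
    rw [← norm_star, star_mul, hP.isSelfAdjoint.star_eq, hP₁s.star_eq]
  have hdiag : ‖P * P₂ * P + (1 - P) * P₂ * (1 - P)‖ ≤ 2 * ‖P₁ * P‖ ^ 2 := by
    refine Matrix.IsStarProjection.norm_mul_mul_add_le hP hP ?_ ?_
    · calc ‖P * P₂ * P‖ = ‖2 • (P * P₁ * (P₁ * P))‖ := by
            rw [hP.isIdempotentElem.mul_deriv2_mul_eq hP₂, norm_neg]
        _ ≤ 2 * (‖P * P₁‖ * ‖P₁ * P‖) := norm_two_nsmul_mul_le _ _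
        _ = 2 * ‖P₁ * P‖ ^ 2 := by rw [hPP₁, sq]
    · calc ‖(1 - P) * P₂ * (1 - P)‖ = ‖2 • (P₁ * P * (P * P₁))‖ := by
            rw [hP.isIdempotentElem.one_sub_mul_deriv2_mul_one_sub_eq hP₂,
              one_sub_mul_deriv_eq hP₁, deriv_mul_one_sub_eq hP₁]
        _ ≤ 2 * (‖P₁ * P‖ * ‖P * P₁‖) := norm_two_nsmul_mul_le _ _
        _ = 2 * ‖P₁ * P‖ ^ 2 := by rw [hPP₁, sq]
  have hoff : ‖P * P₂ * (1 - P) + (1 - P) * P₂ * P‖ ≤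
      (‖A₂‖ + 4 * (‖A₁‖ * ‖P₁ * P‖)) / Δ := by
    have h : ‖(1 - P) * P₂ * P‖ ≤ (‖A₂‖ + 4 * (‖A₁‖ * ‖P₁ * P‖)) / Δ :=
      (le_div_iff₀' hΔ).mpr (mul_norm_one_sub_mul_deriv2_mul_le hP hAP hPA hL₁ hL₂ hgap)
    have h' : ‖P * P₂ * (1 - P)‖ ≤ (‖A₂‖ + 4 * (‖A₁‖ * ‖P₁ * P‖)) / Δ := by
      rwa [← norm_star, star_mul, star_mul, hP.isSelfAdjoint.star_eq, hP₂s.star_eq,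
        hP.one_sub.isSelfAdjoint.star_eq, ← mul_assoc]
    have h'' : ‖(1 - P) * P₂ * (1 - (1 - P))‖ ≤ (‖A₂‖ + 4 * (‖A₁‖ * ‖P₁ * P‖)) / Δ := by
      rwa [sub_sub_cancel]
    simpa only [sub_sub_cancel] using
      Matrix.IsStarProjection.norm_mul_mul_add_le hP hP.one_sub h' h''
  have hx : ‖P₁ * P‖ ≤ ‖A₁‖ / Δ :=
    (le_div_iff₀' hΔ).mpr (mul_norm_deriv_mul_le hP hP₁ hAP hPA hL₁ hgap)
  have hsplit : P₂ = (P * P₂ * P + (1 - P) * P₂ * (1 - P)) +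
      (P * P₂ * (1 - P) + (1 - P) * P₂ * P) := by
    noncomm_ring
  calc ‖P₂‖ ≤ 2 * ‖P₁ * P‖ ^ 2 + (‖A₂‖ + 4 * (‖A₁‖ * ‖P₁ * P‖)) / Δ := by
        rw [hsplit]
        exact norm_add_le_of_le hdiag hoff
    _ ≤ 8 * ‖A₁‖ ^ 2 / Δ ^ 2 + 2 * ‖A₂‖ / Δ :=
        two_mul_sq_add_div_le hΔ (norm_nonneg _) (norm_nonneg _) (norm_nonneg _) hx

end DerivBounds

theorem stmt2_general (n : ℕ)
    (H P : ℝ → Matrix (Fin n) (Fin n) ℂ) (s₀ : ℝ)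
    (H' P' : ℝ → Matrix (Fin n) (Fin n) ℂ)
    (H'' P'' : Matrix (Fin n) (Fin n) ℂ)
    (ω0 : ℝ → ℝ) (Δ : ℝ)
    -- `H` is a path of Hermitian matrices, twice differentiable at `s₀`
    (hHherm : ∀ᶠ s in 𝓝 s₀, (H s).IsHermitian)
    (hHderiv : ∀ᶠ s in 𝓝 s₀, HasDerivAt H (H' s) s)
    (hHderiv2 : HasDerivAt H' H'' s₀)
    -- the gap condition at `s₀`
    (hΔpos : 0 < Δ)
    (hgap : spectrum ℂ (H s₀) ∩
        ((fun x : ℝ => (x : ℂ)) '' Set.Icc (ω0 s₀ - Δ) (ω0 s₀ + Δ)) = {(ω0 s₀ : ℂ)})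
    -- `P` is twice differentiable at `s₀`, and near `s₀` each `P s` is the orthogonal
    -- projection onto the eigenspace of `H s` for the eigenvalue `ω0 s`
    (hPderiv : ∀ᶠ s in 𝓝 s₀, HasDerivAt P (P' s) s)
    (hPderiv2 : HasDerivAt P' P'' s₀)
    (hPproj : ∀ᶠ s in 𝓝 s₀, (P s).IsHermitian ∧ P s * P s = P s ∧
        ∀ v : Fin n → ℂ, (H s).mulVec v = (ω0 s : ℂ) • v ↔ (P s).mulVec v = v) :
    ‖P''‖ ≤ 8 * ‖H' s₀‖ ^ 2 / Δ ^ 2 + 2 * ‖H''‖ / Δ := by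
  obtain ⟨hPs, hPidem, hPeig⟩ := hPproj.self_of_nhds
  have hP : IsStarProjection (P s₀) := ⟨hPidem, hPs⟩
  have hH : (H s₀).IsHermitian := hHherm.self_of_nhds
  have hHP : ∀ᶠ s in 𝓝 s₀, H s * P s = (ω0 s : ℂ) • P s := by
    filter_upwards [hPproj] with s hs
    exact Matrix.mul_eq_smul_of_mulVec_eq_self hs.2.1 fun v => (hs.2.2 v).2
  have hPd : HasSecondDerivAt P P' P'' s₀ := ⟨hPderiv, hPderiv2⟩
  have hAd : HasSecondDerivAt (fun s => H s - (ω0 s₀ : ℂ) • 1) H' H'' s₀ :=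
    HasSecondDerivAt.sub_const ⟨hHderiv, hHderiv2⟩ _
  have hAPP : (fun s => (H s - (ω0 s₀ : ℂ) • 1) * P s) =ᶠ[𝓝 s₀]
      fun s => P s * ((H s - (ω0 s₀ : ℂ) • 1) * P s) := by
    filter_upwards [hHP, hPproj] with s hHPs hPs
    simp only [sub_mul, hHPs, smul_mul_assoc, one_mul, mul_sub, mul_smul_comm, hPs.2.1]
  obtain ⟨hP₁, hP₂⟩ := (hPd.mul hPd).eq_of_eventuallyEq hPd (by
    filter_upwards [hPproj] with s hs using hs.2.1)
  obtain ⟨hL₁, hL₂⟩ := (hAd.mul hPd).eq_of_eventuallyEq (hPd.mul (hAd.mul hPd)) hAPP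
  obtain ⟨hP₁s, hP₂s⟩ := hPd.isSelfAdjoint (by filter_upwards [hPproj] with s hs using hs.1)
  refine norm_deriv2_le hP hP₁s hP₂s hP₁ hP₂ ?_ ?_ hL₁ hL₂ hΔpos fun Y =>
    hH.mul_norm_one_sub_mul_le hP hΔpos
      (fun μ hμ hne => le_abs_sub_of_inter_subset hgap.subset hμ hne) hPeig Y
  · exact hH.isSelfAdjoint.sub (IsSelfAdjoint.smul (Complex.conj_ofReal _) (IsSelfAdjoint.one _))
  · rw [sub_mul, hHP.self_of_nhds, smul_mul_assoc, one_mul, sub_self]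

/-- Second derivative bound for the spectral projector:
`‖P''(s₀)‖ ≤ 8‖H'(s₀)‖²/Δ² + 2‖H''(s₀)‖/Δ`. -/
theorem stmt2 (n : ℕ) (hn : 1 ≤ n)
    (H P : ℝ → Matrix (Fin n) (Fin n) ℂ) (s₀ : ℝ)
    (H' P' : ℝ → Matrix (Fin n) (Fin n) ℂ)
    (H'' P'' : Matrix (Fin n) (Fin n) ℂ)
    (ω0 : ℝ → ℝ) (Δ : ℝ)
    -- `H` is a path of Hermitian matrices, twice differentiable at `s₀`
    (hHherm : ∀ᶠ s in 𝓝 s₀, (H s).IsHermitian)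
    (hHderiv : ∀ᶠ s in 𝓝 s₀, HasDerivAt H (H' s) s)
    (hHderiv2 : HasDerivAt H' H'' s₀)
    -- `ω0` is continuous, and `ω0 s` is an eigenvalue of `H s` for `s` near `s₀`
    (hω0cont : ContinuousAt ω0 s₀)
    (hω0eig : ∀ᶠ s in 𝓝 s₀, (ω0 s : ℂ) ∈ spectrum ℂ (H s))
    -- the gap condition at `s₀`
    (hΔpos : 0 < Δ)
    (hgap : spectrum ℂ (H s₀) ∩
        ((fun x : ℝ => (x : ℂ)) '' Set.Icc (ω0 s₀ - Δ) (ω0 s₀ + Δ)) = {(ω0 s₀ : ℂ)})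
    -- `P` is twice differentiable at `s₀`, and near `s₀` each `P s` is the orthogonal
    -- projection onto the eigenspace of `H s` for the eigenvalue `ω0 s`
    (hPderiv : ∀ᶠ s in 𝓝 s₀, HasDerivAt P (P' s) s)
    (hPderiv2 : HasDerivAt P' P'' s₀)
    (hPproj : ∀ᶠ s in 𝓝 s₀, (P s).IsHermitian ∧ P s * P s = P s ∧
        ∀ v : Fin n → ℂ, (H s).mulVec v = (ω0 s : ℂ) • v ↔ (P s).mulVec v = v) :
    ‖P''‖ ≤ 8 * ‖H' s₀‖ ^ 2 / Δ ^ 2 + 2 * ‖H''‖ / Δ :=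
  stmt2_general n H P s₀ H' P' H'' P'' ω0 Δ hHherm hHderiv hHderiv2 hΔpos hgap hPderiv hPderiv2
    hPproj
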